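/- arXiv:1403.1142 — 2 statements merged into one kernel-verified Lean document; each statement's English description precedes it below -/
import Mathlib

section
/- For a frame ν ñ.σ over terms: the deduction relation satisfies ν ñ.σ ⊢ t if and only if there exists a term M (a recipe) whose free names are disjoint from ñ, whose variables are contained in the domain of σ, and such that Mσ =_E t. -/
/-- Terms over a signature `Fn` (function symbols indexed by arity), names `Name`
and variables `Var`. -/
inductive Term (Name Var : Type) (Fn : ℕ → Type) : Type where
  | nm : Name → Term Name Var Fn
  | vr : Var → Term Name Var Fn
  | app : {n : ℕ} → Fn n → (Fin n → Term Name Var Fn) → Term Name Var Fn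

/-- The set of names occurring in a term. -/
def Term.names {Name Var : Type} {Fn : ℕ → Type} : Term Name Var Fn → Set Name
  | .nm a => {a}
  | .vr _ => ∅
  | .app _ ts => ⋃ i, (ts i).names

/-- The set of variables occurring in a term. -/
def Term.vars {Name Var : Type} {Fn : ℕ → Type} : Term Name Var Fn → Set Var
  | .nm _ => ∅
  | .vr x => {x}
  | .app _ ts => ⋃ i, (ts i).vars

/-- Applying a substitution (mapping variables to ground terms) to a term. -/
def Term.subst {Name Var : Type} {Fn : ℕ → Type}
    (σ : Var → Term Name Empty Fn) : Term Name Var Fn → Term Name Empty Fn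
  | .nm a => .nm a
  | .vr x => σ x
  | .app f ts => .app f fun i => (ts i).subst σ

/-- The deduction relation `ν ñ.σ ⊢ t` of the applied pi calculus:
DName, DFrame, DAppl and DEq.  The frame consists of the restricted names `nn`,
the domain `dom` of the substitution, and the substitution `σ` itself. -/
inductive Deduce {Name Var : Type} {Fn : ℕ → Type}
    (E : Term Name Empty Fn → Term Name Empty Fn → Prop)
    (nn : Set Name) (dom : Set Var) (σ : Var → Term Name Empty Fn) :
    Term Name Empty Fn → Prop where
  | name (a : Name) (ha : a ∉ nn) : Deduce E nn dom σ (.nm a)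
  | frame (x : Var) (hx : x ∈ dom) : Deduce E nn dom σ (σ x)
  | appl {n : ℕ} (f : Fn n) (ts : Fin n → Term Name Empty Fn)
      (h : ∀ i, Deduce E nn dom σ (ts i)) : Deduce E nn dom σ (.app f ts)
  | eq (t t' : Term Name Empty Fn) (h : Deduce E nn dom σ t) (he : E t t') :
      Deduce E nn dom σ t'

/-- Characterization of deduction via recipes: if `E` is reflexive, transitive and
a congruence w.r.t. function application, then `ν ñ.σ ⊢ t` iff there is a recipe
`M` whose names avoid `ñ`, whose variables lie in the domain of `σ`, and with
`Mσ =_E t`. -/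
theorem stmt_6 {Name Var : Type} {Fn : ℕ → Type}
    (E : Term Name Empty Fn → Term Name Empty Fn → Prop)
    (hrefl : ∀ t, E t t)
    (htrans : ∀ a b c, E a b → E b c → E a c)
    (hcong : ∀ {n : ℕ} (f : Fn n) (ts ts' : Fin n → Term Name Empty Fn),
      (∀ i, E (ts i) (ts' i)) → E (.app f ts) (.app f ts'))
    (nn : Set Name) (dom : Set Var) (σ : Var → Term Name Empty Fn)
    (t : Term Name Empty Fn) :
    Deduce E nn dom σ t ↔
      ∃ M : Term Name Var Fn, M.names ∩ nn = ∅ ∧ M.vars ⊆ dom ∧ E (M.subst σ) t := by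
  constructor
  · intro h
    induction h with
    | name a ha =>
        exact ⟨.nm a, by simp [Term.names, Set.singleton_inter_eq_empty.mpr ha],
          by simp [Term.vars], hrefl _⟩
    | frame x hx =>
        exact ⟨.vr x, by simp [Term.names], by simp [Term.vars, hx], hrefl _⟩
    | appl f ts h ih =>
        choose Ms h1 h2 h3 using ih
        refine ⟨.app f Ms, ?_, ?_, ?_⟩
        · simp only [Term.names, Set.iUnion_inter, Set.iUnion_eq_empty]
          exact h1
        · simp only [Term.vars, Set.iUnion_subset_iff]
          exact h2
        · exact hcong f _ _ h3
    | eq t t' h he ih =>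
        obtain ⟨M, h1, h2, h3⟩ := ih
        exact ⟨M, h1, h2, htrans _ _ _ h3 he⟩
  · rintro ⟨M, h1, h2, h3⟩
    refine Deduce.eq _ _ ?_ h3
    clear h3
    induction M with
    | nm a =>
        refine Deduce.name a fun ha => ?_
        rw [Set.eq_empty_iff_forall_notMem] at h1
        exact h1 a ⟨rfl, ha⟩
    | vr x => exact Deduce.frame x (h2 (by simp [Term.vars]))
    | app f ts ih =>
        refine Deduce.appl f _ fun i => ih i ?_ ?_
        · rw [Set.eq_empty_iff_forall_notMem] at h1 ⊢
          exact fun a ⟨hm, hn⟩ => h1 a ⟨Set.mem_iUnion.mpr ⟨i, hm⟩, hn⟩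
        · exact fun x hx => h2 (Set.mem_iUnion.mpr ⟨i, hx⟩)
end

section
/- Given two finite executions each producing a persistent fact (!K(t₁) and !K(t₂) respectively) by extending a common execution prefix using only rules from {MDOut, MDPub, MDFresh, MDAppl, Fresh}, the extensions can be combined (removing duplicated instantiations of Fresh, MDFresh and MDOut) into a single valid execution extending the same prefix in which both !K(t₁) and !K(t₂) hold simultaneously. -/
/-- A multiset rewriting step: consumed linear facts, required (but not consumed)
persistent facts, action labels, and produced facts. -/
structure Step (F L : Type) where
  lin : Multiset F
  per : Multiset F
  act : Multiset L
  rhs : Multiset F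

/-- Valid execution of a list of steps from one state to another: linear
premises are consumed, persistent premises must be present. -/
inductive Exec {F L : Type} [DecidableEq F] :
    Multiset F → List (Step F L) → Multiset F → Prop where
  | nil (S : Multiset F) : Exec S [] S
  | cons {S S' : Multiset F} {st : Step F L} {rest : List (Step F L)}
      (hlin : st.lin ≤ S) (hper : ∀ f ∈ st.per, f ∈ S)
      (h : Exec (S - st.lin + st.rhs) rest S') :
      Exec S (st :: rest) S'

/-- The message deduction and fresh-name rules: MDOut, MDPub, MDFresh, MDAppl and
Fresh.  `!K`-facts appear as persistent premises (checked but never consumed). -/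
def MDstep {T F L : Type} (Out Fr K : T → F) (pub : T → Prop)
    (appl : Multiset T → T → Prop) (st : Step F L) : Prop :=
  st.act = 0 ∧ (
    (∃ u, st.lin = {Out u} ∧ st.per = 0 ∧ st.rhs = {K u}) ∨          -- MDOut
    (∃ u, pub u ∧ st.lin = 0 ∧ st.per = 0 ∧ st.rhs = {K u}) ∨        -- MDPub
    (∃ a, st.lin = {Fr a} ∧ st.per = 0 ∧ st.rhs = {K a}) ∨           -- MDFresh
    (∃ args u, appl args u ∧ st.lin = 0 ∧ st.per = Multiset.map K args ∧
      st.rhs = {K u}) ∨                                              -- MDAppl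
    (∃ a, st.lin = 0 ∧ st.per = 0 ∧ st.rhs = {Fr a}))                -- Fresh

/-!
Replay the second extension on top of the end state of the first. Call a state `B` a cover
of `A` if every fact of `A` is still in `B` or is an `Out u`/`Fr u` fact whose `!K u` is in
`B`. The rules only ever move forward in this order, since a consumed `Out u` or `Fr u`
leaves `!K u` behind and `!K` facts persist. A cover can imitate every step: MDPub, MDAppl
and Fresh consume nothing and need only `!K` premises, which the cover has; MDOut and
MDFresh either find their premise or are dropped, because the premise was already turned
into the same `!K u` (`Out` and `Fr` are injective with disjoint images).
-/

def Covers {T F : Type} (Out Fr K : T → F) (A B : Multiset F) : Prop :=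
  ∀ f ∈ A, f ∈ B ∨ ∃ u, (f = Out u ∨ f = Fr u) ∧ K u ∈ B

namespace Covers

variable {T F : Type} {Out Fr K : T → F} {A B C : Multiset F}

theorem refl (A : Multiset F) : Covers Out Fr K A A :=
  fun _ hf => Or.inl hf

theorem of_le (h : A ≤ B) : Covers Out Fr K A B :=
  fun _ hf => Or.inl (Multiset.mem_of_le h hf)

theorem K_mem (hOK : ∀ a b, Out a ≠ K b) (hFK : ∀ a b, Fr a ≠ K b)
    (h : Covers Out Fr K A B) {u : T} (hu : K u ∈ A) : K u ∈ B := by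
  rcases h _ hu with hB | ⟨v, hv | hv, -⟩
  · exact hB
  · exact absurd hv.symm (hOK v u)
  · exact absurd hv.symm (hFK v u)

theorem trans (hOK : ∀ a b, Out a ≠ K b) (hFK : ∀ a b, Fr a ≠ K b)
    (hAB : Covers Out Fr K A B) (hBC : Covers Out Fr K B C) : Covers Out Fr K A C := by
  intro f hf
  rcases hAB f hf with hB | ⟨u, hu, hKB⟩
  · exact hBC f hB
  · exact Or.inr ⟨u, hu, hBC.K_mem hOK hFK hKB⟩

theorem add_right (h : Covers Out Fr K A B) (C : Multiset F) :
    Covers Out Fr K (A + C) (B + C) := by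
  intro f hf
  rcases Multiset.mem_add.1 hf with hA | hC
  · exact (h f hA).imp (fun hB => Multiset.mem_add.2 (Or.inl hB))
      fun ⟨u, hu, hK⟩ => ⟨u, hu, Multiset.mem_add.2 (Or.inl hK)⟩
  · exact Or.inl (Multiset.mem_add.2 (Or.inr hC))

variable [DecidableEq F]

theorem erase_add_K {g : F} {u : T} (hg : g = Out u ∨ g = Fr u) :
    Covers Out Fr K A (A.erase g + {K u}) := by
  intro f hf
  by_cases hfg : f = g
  · exact Or.inr ⟨u, hfg ▸ hg, by simp⟩
  · exact Or.inl (Multiset.mem_add.2 (Or.inl ((Multiset.mem_erase_of_ne hfg).2 hf)))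

theorem erase_add_K_of_mem (h : Covers Out Fr K A B) {g : F} {u : T} (hKu : K u ∈ B) :
    Covers Out Fr K (A.erase g + {K u}) B := by
  intro f hf
  rcases Multiset.mem_add.1 hf with hA | hKf
  · exact h f (Multiset.mem_of_mem_erase hA)
  · exact Or.inl (Multiset.mem_singleton.1 hKf ▸ hKu)

theorem erase_add_K_congr (hOK : ∀ a b, Out a ≠ K b) (hFK : ∀ a b, Fr a ≠ K b)
    (h : Covers Out Fr K A B) {g : F} {u : T} (hg : g = Out u ∨ g = Fr u) :
    Covers Out Fr K (A.erase g + {K u}) (B.erase g + {K u}) := by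
  have hgK : ∀ v, K v ≠ g := by
    rintro v hv
    rcases hg with rfl | rfl
    exacts [hOK u v hv.symm, hFK u v hv.symm]
  intro f hf
  rcases Multiset.mem_add.1 hf with hA | hKf
  · by_cases hfg : f = g
    · exact Or.inr ⟨u, hfg ▸ hg, by simp⟩
    · rcases h f (Multiset.mem_of_mem_erase hA) with hB | ⟨v, hv, hKv⟩
      · exact Or.inl (Multiset.mem_add.2 (Or.inl ((Multiset.mem_erase_of_ne hfg).2 hB)))
      · exact Or.inr ⟨v, hv,
          Multiset.mem_add.2 (Or.inl ((Multiset.mem_erase_of_ne (hgK v)).2 hKv))⟩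
  · exact Or.inl (Multiset.mem_add.2 (Or.inr hKf))

end Covers

theorem MDstep.consuming_or_nonconsuming {T F L : Type} {Out Fr K : T → F}
    {pub : T → Prop} {appl : Multiset T → T → Prop} {st : Step F L}
    (hst : MDstep Out Fr K pub appl st) :
    (∃ g u, (g = Out u ∨ g = Fr u) ∧ st.lin = {g} ∧ st.per = 0 ∧ st.rhs = {K u}) ∨
      (st.lin = 0 ∧ ∀ f ∈ st.per, ∃ x, f = K x) := by
  obtain ⟨-, hOut | hPub | hFresh | hAppl | hNew⟩ := hst
  · obtain ⟨u, hl, hp, hr⟩ := hOut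
    exact Or.inl ⟨Out u, u, Or.inl rfl, hl, hp, hr⟩
  · obtain ⟨u, -, hl, hp, -⟩ := hPub
    exact Or.inr ⟨hl, by simp [hp]⟩
  · obtain ⟨a, hl, hp, hr⟩ := hFresh
    exact Or.inl ⟨Fr a, a, Or.inr rfl, hl, hp, hr⟩
  · obtain ⟨args, u, -, hl, hp, -⟩ := hAppl
    refine Or.inr ⟨hl, fun f hf => ?_⟩
    obtain ⟨x, -, rfl⟩ := Multiset.mem_map.1 (hp ▸ hf)
    exact ⟨x, rfl⟩
  · obtain ⟨a, hl, hp, -⟩ := hNew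
    exact Or.inr ⟨hl, by simp [hp]⟩

section Execution

variable {T F L : Type} [DecidableEq F] {Out Fr K : T → F} {pub : T → Prop}
  {appl : Multiset T → T → Prop}

theorem Exec.append {A B C : Multiset F} {l₁ l₂ : List (Step F L)}
    (h₁ : Exec A l₁ B) (h₂ : Exec B l₂ C) : Exec A (l₁ ++ l₂) C := by
  induction h₁ with
  | nil => exact h₂
  | cons hlin hper _ ih => exact Exec.cons hlin hper (ih h₂)

theorem MDstep.covers {A : Multiset F} {st : Step F L}
    (hst : MDstep Out Fr K pub appl st) : Covers Out Fr K A (A - st.lin + st.rhs) := by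
  rcases hst.consuming_or_nonconsuming with ⟨g, u, hg, hl, -, hr⟩ | ⟨hl, -⟩
  · rw [hl, hr, Multiset.sub_singleton]
    exact Covers.erase_add_K hg
  · rw [hl, Multiset.sub_zero]
    exact Covers.of_le (Multiset.le_add_right A st.rhs)

theorem Exec.covers (hOK : ∀ a b, Out a ≠ K b) (hFK : ∀ a b, Fr a ≠ K b)
    {A C : Multiset F} {l : List (Step F L)} (h : Exec A l C)
    (hmd : ∀ st ∈ l, MDstep Out Fr K pub appl st) : Covers Out Fr K A C := by
  induction h with
  | nil A => exact Covers.refl A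
  | cons _ _ _ ih =>
    exact (MDstep.covers (hmd _ List.mem_cons_self)).trans hOK hFK
      (ih fun s hs => hmd s (List.mem_cons_of_mem _ hs))

theorem Covers.exists_step (hOutInj : Function.Injective Out)
    (hFrInj : Function.Injective Fr) (hOF : ∀ a b, Out a ≠ Fr b) (hOK : ∀ a b, Out a ≠ K b)
    (hFK : ∀ a b, Fr a ≠ K b) {A B : Multiset F} {st : Step F L} (hAB : Covers Out Fr K A B)
    (hst : MDstep Out Fr K pub appl st) (hlin : st.lin ≤ A) (hper : ∀ f ∈ st.per, f ∈ A) :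
    ∃ (l : List (Step F L)) (B' : Multiset F), Exec B l B' ∧
      (∀ s ∈ l, MDstep Out Fr K pub appl s) ∧ Covers Out Fr K (A - st.lin + st.rhs) B' := by
  have hst' : ∀ s ∈ [st], MDstep Out Fr K pub appl s := by simpa using hst
  rcases hst.consuming_or_nonconsuming with ⟨g, u, hg, hl, hp, hr⟩ | ⟨hl, hpK⟩
  · have hstep : A - st.lin + st.rhs = A.erase g + {K u} := by
      rw [hl, hr, Multiset.sub_singleton]
    rw [hstep]
    rw [hl, Multiset.singleton_le] at hlin
    rcases hAB g hlin with hgB | ⟨v, hv, hKv⟩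
    · refine ⟨[st], B.erase g + {K u}, Exec.cons (by simpa [hl] using hgB) (by simp [hp]) ?_,
        hst', hAB.erase_add_K_congr hOK hFK hg⟩
      rw [hl, hr, Multiset.sub_singleton]
      exact Exec.nil _
    · have hvu : v = u := by
        rcases hg with rfl | rfl <;> rcases hv with hv | hv
        exacts [hOutInj hv.symm, absurd hv (hOF u v), absurd hv.symm (hOF v u),
          hFrInj hv.symm]
      exact ⟨[], B, Exec.nil B, by simp, hAB.erase_add_K_of_mem (hvu ▸ hKv)⟩
  · have hperB : ∀ f ∈ st.per, f ∈ B := by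
      intro f hf
      obtain ⟨x, rfl⟩ := hpK f hf
      exact hAB.K_mem hOK hFK (hper _ hf)
    rw [hl, Multiset.sub_zero]
    refine ⟨[st], B + st.rhs, Exec.cons (by simp [hl]) hperB ?_, hst', hAB.add_right st.rhs⟩
    rw [hl, Multiset.sub_zero]
    exact Exec.nil _

theorem Covers.exists_exec (hOutInj : Function.Injective Out)
    (hFrInj : Function.Injective Fr) (hOF : ∀ a b, Out a ≠ Fr b) (hOK : ∀ a b, Out a ≠ K b)
    (hFK : ∀ a b, Fr a ≠ K b) {A B C : Multiset F} {l : List (Step F L)}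
    (hAB : Covers Out Fr K A B) (h : Exec A l C) (hmd : ∀ st ∈ l, MDstep Out Fr K pub appl st) :
    ∃ (l' : List (Step F L)) (D : Multiset F), Exec B l' D ∧
      (∀ s ∈ l', MDstep Out Fr K pub appl s) ∧ Covers Out Fr K C D := by
  induction h generalizing B with
  | nil => exact ⟨[], B, Exec.nil B, by simp, hAB⟩
  | cons hlin hper _ ih =>
    obtain ⟨l₁, B₁, hexec₁, hmd₁, hcov₁⟩ := hAB.exists_step hOutInj hFrInj hOF hOK hFK
      (hmd _ List.mem_cons_self) hlin hper
    obtain ⟨l₂, D, hexec₂, hmd₂, hcov₂⟩ :=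
      ih hcov₁ fun s hs => hmd s (List.mem_cons_of_mem _ hs)
    exact ⟨l₁ ++ l₂, D, hexec₁.append hexec₂, List.forall_mem_append.2 ⟨hmd₁, hmd₂⟩,
      hcov₂⟩

end Execution

theorem stmt_17_general {T F L : Type} [DecidableEq F]
    (Out Fr K : T → F) (pub : T → Prop) (appl : Multiset T → T → Prop)
    (hOutInj : Function.Injective Out) (hFrInj : Function.Injective Fr)
    (hOF : ∀ a b, Out a ≠ Fr b) (hOK : ∀ a b, Out a ≠ K b)
    (hFK : ∀ a b, Fr a ≠ K b)
    (S S1 S2 : Multiset F) (ext1 ext2 : List (Step F L)) (t1 t2 : T)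
    (h1 : Exec S ext1 S1) (h2 : Exec S ext2 S2)
    (hmd1 : ∀ st ∈ ext1, MDstep Out Fr K pub appl st)
    (hmd2 : ∀ st ∈ ext2, MDstep Out Fr K pub appl st)
    (hK1 : K t1 ∈ S1) (hK2 : K t2 ∈ S2) :
    ∃ (ext : List (Step F L)) (S' : Multiset F),
      Exec S ext S' ∧ (∀ st ∈ ext, MDstep Out Fr K pub appl st) ∧
      K t1 ∈ S' ∧ K t2 ∈ S' := by
  have hS1 : Covers Out Fr K S S1 := h1.covers hOK hFK hmd1
  obtain ⟨ext, S', hexec, hmd, hS2⟩ := hS1.exists_exec hOutInj hFrInj hOF hOK hFK h2 hmd2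
  have hS1S' : Covers Out Fr K S1 S' := hexec.covers hOK hFK hmd
  exact ⟨ext1 ++ ext, S', h1.append hexec, List.forall_mem_append.2 ⟨hmd1, hmd⟩,
    hS1S'.K_mem hOK hFK hK1, hS2.K_mem hOK hFK hK2⟩

/-- Two executions extending a common prefix state `S` using only the rules
MDOut, MDPub, MDFresh, MDAppl and Fresh, producing the persistent facts `!K t₁`
and `!K t₂` respectively, can be combined (dropping duplicated instantiations of
Fresh, MDFresh and MDOut) into a single valid execution from `S` using only those
rules, in which both `!K t₁` and `!K t₂` hold simultaneously. -/
theorem stmt_17 {T F L : Type} [DecidableEq F]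
    (Out Fr K : T → F) (pub : T → Prop) (appl : Multiset T → T → Prop)
    (hOutInj : Function.Injective Out) (hFrInj : Function.Injective Fr)
    (hKInj : Function.Injective K)
    (hOF : ∀ a b, Out a ≠ Fr b) (hOK : ∀ a b, Out a ≠ K b)
    (hFK : ∀ a b, Fr a ≠ K b)
    (S S1 S2 : Multiset F) (ext1 ext2 : List (Step F L)) (t1 t2 : T)
    (h1 : Exec S ext1 S1) (h2 : Exec S ext2 S2)
    (hmd1 : ∀ st ∈ ext1, MDstep Out Fr K pub appl st)
    (hmd2 : ∀ st ∈ ext2, MDstep Out Fr K pub appl st)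
    (hK1 : K t1 ∈ S1) (hK2 : K t2 ∈ S2) :
    ∃ (ext : List (Step F L)) (S' : Multiset F),
      Exec S ext S' ∧ (∀ st ∈ ext, MDstep Out Fr K pub appl st) ∧
      K t1 ∈ S' ∧ K t2 ∈ S' :=
  stmt_17_general Out Fr K pub appl hOutInj hFrInj hOF hOK hFK S S1 S2 ext1 ext2 t1 t2 h1 h2 hmd1
    hmd2 hK1 hK2
end
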